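/- Let d ≥ 1, let p be a prime with p ∤ d, and let H ⊆ (ℤ/d)⁴ be a subgroup. Suppose that 𝔄_d ∩ H contains exactly one element a₀ of age 1, and let h denote the order of a₀ in (ℤ/d)⁴. Then: (1) if p^ℓ ≡ −1 (mod h) for some positive integer ℓ, then 𝔈_d(p) ∩ H = ∅; (2) if p^ℓ ≢ −1 (mod h) for all positive integers ℓ, then 𝔈_d(p) ∩ H = 𝔈_d(0) ∩ H. -/

import Mathlib

/-- `M_d`: quadruples in `(ℤ/d)⁴` whose coordinates sum to zero, with all coordinates
nonzero (here: the subset `𝔄_d ⊆ M_d`). -/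
def frakA (d : ℕ) : Set (Fin 4 → ZMod d) :=
  {a | (∑ i, a i = 0) ∧ ∀ i, a i ≠ 0}

/-- The age `S(a) = Σᵢ ⟨âᵢ/d⟩`, where `âᵢ ∈ ℤ` is any lift of `aᵢ` (we use the canonical
lift `(a i).val`; the fractional part is independent of the choice of lift). -/
noncomputable def age {d : ℕ} (a : Fin 4 → ZMod d) : ℚ :=
  ∑ i, Int.fract (((a i).val : ℚ) / d)

/-- `𝔅_d(0)`: elements of `𝔄_d` all of whose `(ℤ/d)ˣ`-multiples have age 2. -/
noncomputable def frakB0 (d : ℕ) : Set (Fin 4 → ZMod d) :=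
  {a ∈ frakA d | ∀ t : (ZMod d)ˣ, age (fun i => (t : ZMod d) * a i) = 2}

/-- `𝔈_d(0) = 𝔄_d \ 𝔅_d(0)` (denoted `𝔍_d(0)` in the paper). -/
noncomputable def frakE0 (d : ℕ) : Set (Fin 4 → ZMod d) :=
  frakA d \ frakB0 d

/-- `𝔅_d(p)` for a prime `p ∤ d`, where `f = orderOf (p : ZMod d)` is the multiplicative
order of `p` mod `d`: elements `a ∈ 𝔄_d` with `Σ_{j<f} S(t·pʲ·a) = 2f` for all
`t ∈ (ℤ/d)ˣ`. -/
noncomputable def frakBp (d p : ℕ) : Set (Fin 4 → ZMod d) :=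
  {a ∈ frakA d | ∀ t : (ZMod d)ˣ,
    ∑ j ∈ Finset.range (orderOf (p : ZMod d)),
      age (fun i => (t : ZMod d) * (p : ZMod d) ^ j * a i) =
        2 * (orderOf (p : ZMod d) : ℚ)}

/-- `𝔈_d(p) = 𝔄_d \ 𝔅_d(p)` (denoted `𝔍_d(p)` in the paper). -/
noncomputable def frakEp (d p : ℕ) : Set (Fin 4 → ZMod d) :=
  frakA d \ frakBp d p

/-- The orbit of `b ∈ (ℤ/d)⁴` under the cyclic subgroup `⟨p⟩ ⊆ (ℤ/d)ˣ`. -/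
def pOrbit (d p : ℕ) (b : Fin 4 → ZMod d) : Set (Fin 4 → ZMod d) :=
  {x | ∃ j : ℕ, x = fun i => (p : ZMod d) ^ j * b i}

/-!
Every `a ∈ 𝔄_d` has age 1, 2 or 3, and `S(-a) = 4 - S(a)`. So inside `H` the only element of
age 3 is `-a₀`, and an element of `𝔄_d ∩ H` either has all its unit multiples of age 2 (it then
lies in `𝔅_d(0)` and in `𝔅_d(p)`) or is a unit multiple of `a₀`. Multiplication by `pˡ` negates
the multiples of `a₀` exactly when `pˡ ≡ -1 (mod h)`. If it does, shifting the index of the orbit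
sum `Σ_j S(pʲ x)` by `ℓ` replaces each age `S` by `4 - S`, so the sum is `2f`. If it never does,
no `pʲ a₀` equals `-a₀`, so every term of the orbit sum of `a₀` is at most 2 while the `j = 0`
term is `S(a₀) = 1`, and the sum falls short of `2f`.
-/

open Finset

theorem Function.Periodic.sum_range_comp_add {M : Type*} [AddCancelCommMonoid M] {g : ℕ → M}
    {f : ℕ} (hg : Function.Periodic g f) (ℓ : ℕ) :
    ∑ j ∈ range f, g (j + ℓ) = ∑ j ∈ range f, g j := by
  induction ℓ generalizing g with
  | zero => rfl
  | succ ℓ ih =>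
    have hshift : ∑ j ∈ range f, g (j + 1) = ∑ j ∈ range f, g j := by
      have := (sum_range_succ' g f).symm.trans (sum_range_succ g f)
      rwa [show g f = g 0 by simpa using hg 0, add_left_inj] at this
    simpa only [← add_assoc] using (ih (hg.add_const 1)).trans hshift

theorem nsmul_eq_neg_iff_natCast_eq_neg_one {G : Type*} [AddGroup G] (a : G) (n : ℕ) :
    n • a = -a ↔ (n : ZMod (addOrderOf a)) = -1 := by
  rw [eq_neg_iff_add_eq_zero, ← succ_nsmul, ← addOrderOf_dvd_iff_nsmul_eq_zero,
    ← ZMod.natCast_eq_zero_iff, Nat.cast_succ, eq_neg_iff_add_eq_zero]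

theorem neg_mem_frakA {d : ℕ} {a : Fin 4 → ZMod d} (ha : a ∈ frakA d) : -a ∈ frakA d :=
  ⟨by simp [ha.1], fun i => neg_ne_zero.mpr (ha.2 i)⟩

theorem smul_mem_frakA {d : ℕ} {c : ZMod d} (hc : IsUnit c) {a : Fin 4 → ZMod d}
    (ha : a ∈ frakA d) :
    c • a ∈ frakA d :=
  ⟨by simp only [Pi.smul_apply, smul_eq_mul, ← mul_sum, ha.1, mul_zero],
    fun i => by simpa [hc.mul_right_eq_zero] using ha.2 i⟩

section Age

variable {d : ℕ} [NeZero d]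

theorem fract_val_div (x : ZMod d) : Int.fract ((x.val : ℚ) / d) = x.val / d :=
  Int.fract_eq_self.mpr ⟨by positivity,
    (div_lt_one (by exact_mod_cast NeZero.pos d)).mpr (by exact_mod_cast x.val_lt)⟩

theorem age_eq_sum_val_div (a : Fin 4 → ZMod d) : age a = (∑ i, ((a i).val : ℚ)) / d := by
  simp only [age, fract_val_div, sum_div]

theorem age_neg {a : Fin 4 → ZMod d} (ha : a ∈ frakA d) : age (-a) = 4 - age a := by
  have hval : ∀ i, (((-a) i).val : ℚ) = d - (a i).val := fun i => by
    have : NeZero (a i) := ⟨ha.2 i⟩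
    rw [Pi.neg_apply, ZMod.val_neg_of_ne_zero, Nat.cast_sub (a i).val_lt.le]
  have hd : (d : ℚ) ≠ 0 := NeZero.ne _
  simp only [age_eq_sum_val_div, hval, sum_sub_distrib, sum_const, card_univ, Fintype.card_fin]
  field_simp
  ring

theorem age_eq_one_or_two_or_three {a : Fin 4 → ZMod d} (ha : a ∈ frakA d) :
    age a = 1 ∨ age a = 2 ∨ age a = 3 := by
  obtain ⟨k, hk⟩ : d ∣ ∑ i, (a i).val := by
    rw [← ZMod.natCast_eq_zero_iff, Nat.cast_sum]
    simpa using ha.1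
  have hage : age a = k := by
    rw [age_eq_sum_val_div, ← Nat.cast_sum, hk]
    push_cast
    field_simp [NeZero.ne d]
  have hpos : 0 < age a := sum_pos (fun i _ => by
    rw [fract_val_div]
    exact div_pos (by exact_mod_cast ZMod.val_pos.mpr (ha.2 i)) (by exact_mod_cast NeZero.pos d))
    univ_nonempty
  have hlt : age a < 4 :=
    calc age a < ∑ _i : Fin 4, (1 : ℚ) :=
          sum_lt_sum_of_nonempty univ_nonempty fun i _ => Int.fract_lt_one _
      _ = 4 := by norm_num
  rw [hage] at hpos hlt ⊢
  have hk0 : 0 < k := by exact_mod_cast hpos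
  have hk4 : k < 4 := by exact_mod_cast hlt
  interval_cases k <;> norm_num

end Age

theorem mem_frakBp_iff {d p : ℕ} {a : Fin 4 → ZMod d} :
    a ∈ frakBp d p ↔ a ∈ frakA d ∧ ∀ t : (ZMod d)ˣ,
      ∑ j ∈ range (orderOf (p : ZMod d)), age ((p : ZMod d) ^ j • (t : ZMod d) • a) =
        2 * (orderOf (p : ZMod d) : ℚ) := by
  simp_rw [smul_smul, mul_comm _ (_ : ZMod d)]
  rfl

theorem sum_age_pow_smul_of_pow_smul_eq_neg {d : ℕ} [NeZero d] {w : ZMod d} (hw : IsUnit w)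
    {x : Fin 4 → ZMod d} (hx : x ∈ frakA d) {ℓ : ℕ} (hℓ : w ^ ℓ • x = -x) :
    ∑ j ∈ range (orderOf w), age (w ^ j • x) = 2 * (orderOf w : ℚ) := by
  set g : ℕ → ℚ := fun j => age (w ^ j • x)
  have hper : Function.Periodic g (orderOf w) := fun j => by
    simp only [g, pow_add, pow_orderOf_eq_one, mul_one]
  have hneg : ∀ j, g (j + ℓ) = 4 - g j := fun j => by
    simp only [g, pow_add, mul_smul, hℓ, smul_neg, age_neg (smul_mem_frakA (hw.pow j) hx)]
  have hshift := hper.sum_range_comp_add ℓ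
  simp only [hneg, sum_sub_distrib, sum_const, card_range, nsmul_eq_mul] at hshift
  linarith

theorem frakB0_subset_frakBp {d p : ℕ} (hp : IsUnit (p : ZMod d)) : frakB0 d ⊆ frakBp d p := by
  rintro a ⟨ha, hage⟩
  refine mem_frakBp_iff.mpr ⟨ha, fun t => ?_⟩
  have hterm : ∀ j, age ((p : ZMod d) ^ j • (t : ZMod d) • a) = 2 := fun j => by
    have h := hage (hp.unit ^ j * t)
    rw [Units.val_mul, Units.val_pow_eq_pow_val, IsUnit.unit_spec] at h
    rwa [smul_smul]
  simp only [hterm, sum_const, card_range, nsmul_eq_mul]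
  ring

section UniqueAgeOne

variable {d : ℕ} [NeZero d] {H : AddSubgroup (Fin 4 → ZMod d)} {a₀ b : Fin 4 → ZMod d}

theorem eq_neg_of_age_eq_three (huniq : ∀ b, b ∈ frakA d → b ∈ H → age b = 1 → b = a₀)
    (hbA : b ∈ frakA d) (hbH : b ∈ H) (hb : age b = 3) : b = -a₀ := by
  refine neg_eq_iff_eq_neg.mp (huniq (-b) (neg_mem_frakA hbA) (neg_mem hbH) ?_)
  rw [age_neg hbA, hb]
  norm_num

theorem eq_or_eq_neg_of_age_ne_two (huniq : ∀ b, b ∈ frakA d → b ∈ H → age b = 1 → b = a₀)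
    (hbA : b ∈ frakA d) (hbH : b ∈ H) (hb : age b ≠ 2) : b = a₀ ∨ b = -a₀ := by
  rcases age_eq_one_or_two_or_three hbA with h | h | h
  · exact .inl (huniq b hbA hbH h)
  · exact absurd h hb
  · exact .inr (eq_neg_of_age_eq_three huniq hbA hbH h)

theorem age_le_two_of_ne_neg (huniq : ∀ b, b ∈ frakA d → b ∈ H → age b = 1 → b = a₀)
    (hbA : b ∈ frakA d) (hbH : b ∈ H) (hb : b ≠ -a₀) : age b ≤ 2 := by
  rcases age_eq_one_or_two_or_three hbA with h | h | h
  · norm_num [h]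
  · exact h.le
  · exact absurd (eq_neg_of_age_eq_three huniq hbA hbH h) hb

theorem exists_unit_smul_eq_of_age_smul_ne_two
    (huniq : ∀ b, b ∈ frakA d → b ∈ H → age b = 1 → b = a₀) (hbA : b ∈ frakA d) (hbH : b ∈ H)
    {c : ZMod d} (hc : IsUnit c) (h : age (c • b) ≠ 2) :
    ∃ t : (ZMod d)ˣ, (t : ZMod d) • b = a₀ := by
  obtain ⟨u, rfl⟩ := hc
  have hcH : (u : ZMod d) • b ∈ H := (H.toZModSubmodule d).smul_mem _ hbH
  rcases eq_or_eq_neg_of_age_ne_two huniq (smul_mem_frakA u.isUnit hbA) hcH h with h' | h'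
  · exact ⟨u, h'⟩
  · exact ⟨-u, by rw [Units.val_neg, neg_smul, h', neg_neg]⟩

theorem sum_age_pow_smul_lt (huniq : ∀ b, b ∈ frakA d → b ∈ H → age b = 1 → b = a₀)
    (ha₀A : a₀ ∈ frakA d) (ha₀H : a₀ ∈ H) (hage : age a₀ = 1) {w : ZMod d} (hw : IsUnit w)
    (hw₀ : ∀ ℓ : ℕ, 0 < ℓ → w ^ ℓ • a₀ ≠ -a₀) :
    ∑ j ∈ range (orderOf w), age (w ^ j • a₀) < 2 * (orderOf w : ℚ) := by
  obtain ⟨n, hn⟩ : ∃ n, orderOf w = n + 1 := by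
    obtain ⟨u, rfl⟩ := hw
    rw [orderOf_units]
    exact Nat.exists_eq_succ_of_ne_zero (orderOf_pos u).ne'
  have htail : ∑ j ∈ range n, age (w ^ (j + 1) • a₀) ≤ ∑ j ∈ range n, 2 :=
    sum_le_sum fun j _ => age_le_two_of_ne_neg huniq (smul_mem_frakA (hw.pow _) ha₀A)
      ((H.toZModSubmodule d).smul_mem _ ha₀H) (hw₀ _ j.succ_pos)
  rw [hn, sum_range_succ', pow_zero, one_smul, hage]
  simp only [sum_const, card_range, nsmul_eq_mul] at htail
  push_cast
  linarith

theorem frakEp_inter_eq_empty (huniq : ∀ b, b ∈ frakA d → b ∈ H → age b = 1 → b = a₀)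
    {p : ℕ} (hp : IsUnit (p : ZMod d)) {ℓ : ℕ} (hℓ : (p : ZMod d) ^ ℓ • a₀ = -a₀) :
    frakEp d p ∩ H = ∅ := by
  refine Set.eq_empty_of_forall_notMem fun a ⟨⟨haA, haBp⟩, haH⟩ =>
    haBp (mem_frakBp_iff.mpr ⟨haA, fun t => ?_⟩)
  set x := (t : ZMod d) • a
  have hxA : x ∈ frakA d := smul_mem_frakA t.isUnit haA
  have hxH : x ∈ H := (H.toZModSubmodule d).smul_mem _ haH
  by_cases hx : ∃ u : (ZMod d)ˣ, (u : ZMod d) • x = a₀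
  · obtain ⟨u, hu⟩ := hx
    refine sum_age_pow_smul_of_pow_smul_eq_neg hp hxA (ℓ := ℓ) ?_
    have hxu : x = u⁻¹ • a₀ := eq_inv_smul_iff.mpr hu
    rw [hxu, smul_comm, hℓ, smul_neg]
  · have hterm : ∀ j, age ((p : ZMod d) ^ j • x) = 2 := fun j => by
      by_contra h
      exact hx (exists_unit_smul_eq_of_age_smul_ne_two huniq hxA hxH (hp.pow j) h)
    simp only [hterm, sum_const, card_range, nsmul_eq_mul]
    ring

theorem notMem_frakBp_of_unit_smul_eq (huniq : ∀ b, b ∈ frakA d → b ∈ H → age b = 1 → b = a₀)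
    (ha₀A : a₀ ∈ frakA d) (ha₀H : a₀ ∈ H) (hage : age a₀ = 1) {p : ℕ}
    (hp : IsUnit (p : ZMod d)) (hp₀ : ∀ ℓ : ℕ, 0 < ℓ → (p : ZMod d) ^ ℓ • a₀ ≠ -a₀)
    {t : (ZMod d)ˣ} (ht : (t : ZMod d) • b = a₀) : b ∉ frakBp d p := fun hb => by
  have hsum := (mem_frakBp_iff.mp hb).2 t
  rw [ht] at hsum
  exact (sum_age_pow_smul_lt huniq ha₀A ha₀H hage hp hp₀).ne hsum

theorem frakEp_inter_eq_frakE0_inter (huniq : ∀ b, b ∈ frakA d → b ∈ H → age b = 1 → b = a₀)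
    (ha₀A : a₀ ∈ frakA d) (ha₀H : a₀ ∈ H) (hage : age a₀ = 1) {p : ℕ}
    (hp : IsUnit (p : ZMod d)) (hp₀ : ∀ ℓ : ℕ, 0 < ℓ → (p : ZMod d) ^ ℓ • a₀ ≠ -a₀) :
    frakEp d p ∩ H = frakE0 d ∩ H := by
  ext a
  constructor
  · rintro ⟨⟨haA, haBp⟩, haH⟩
    exact ⟨⟨haA, fun haB0 => haBp (frakB0_subset_frakBp hp haB0)⟩, haH⟩
  · rintro ⟨⟨haA, haB0⟩, haH⟩
    obtain ⟨s, hs⟩ : ∃ s : (ZMod d)ˣ, age ((s : ZMod d) • a) ≠ 2 := by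
      by_contra! h
      exact haB0 ⟨haA, h⟩
    obtain ⟨t, ht⟩ := exists_unit_smul_eq_of_age_smul_ne_two huniq haA haH s.isUnit hs
    exact ⟨⟨haA, notMem_frakBp_of_unit_smul_eq huniq ha₀A ha₀H hage hp hp₀ ht⟩, haH⟩

end UniqueAgeOne

/-- Suppose `𝔄_d ∩ H` contains exactly one element `a₀` of age 1, of additive order `h`, and
`p` is a prime not dividing `d`.  If `pˡ ≡ −1 (mod h)` for some `ℓ ≥ 1` then
`𝔈_d(p) ∩ H = ∅`; otherwise `𝔈_d(p) ∩ H = 𝔈_d(0) ∩ H`. -/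
theorem frakEp_inter_empty_or_eq (d : ℕ) (hd : 1 ≤ d) (p : ℕ) (hp : p.Prime)
    (hpd : ¬ p ∣ d) (H : AddSubgroup (Fin 4 → ZMod d))
    (a₀ : Fin 4 → ZMod d) (ha₀A : a₀ ∈ frakA d) (ha₀H : a₀ ∈ H) (hage : age a₀ = 1)
    (huniq : ∀ b, b ∈ frakA d → b ∈ H → age b = 1 → b = a₀) :
    ((∃ ℓ : ℕ, 0 < ℓ ∧ (p : ZMod (addOrderOf a₀)) ^ ℓ = -1) →
        frakEp d p ∩ H = ∅) ∧
    ((∀ ℓ : ℕ, 0 < ℓ → (p : ZMod (addOrderOf a₀)) ^ ℓ ≠ -1) →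
        frakEp d p ∩ H = frakE0 d ∩ H) := by
  have : NeZero d := ⟨by omega⟩
  have hpu : IsUnit (p : ZMod d) := (ZMod.isUnit_prime_iff_not_dvd hp).mpr hpd
  have hpow (ℓ : ℕ) : (p : ZMod d) ^ ℓ • a₀ = -a₀ ↔ (p : ZMod (addOrderOf a₀)) ^ ℓ = -1 := by
    rw [← Nat.cast_pow, ← Nat.cast_pow, Nat.cast_smul_eq_nsmul, nsmul_eq_neg_iff_natCast_eq_neg_one]
  exact ⟨fun ⟨ℓ, _, hℓ⟩ => frakEp_inter_eq_empty huniq hpu ((hpow ℓ).mpr hℓ),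
    fun hno => frakEp_inter_eq_frakE0_inter huniq ha₀A ha₀H hage hpu
      fun ℓ hℓ => (hpow ℓ).not.mpr (hno ℓ hℓ)⟩
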